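/- Let α ≥ 0 and 0 < b₀ ≤ b₁ < ∞, and for b > 0, x > 0, w ≥ 0 define R(b,x,w) := 1 − √(1+w) · e^{−bwx} · I_α(bx(1+w))/I_α(bx). Then there exists a constant C < ∞, depending only on α, b₀ and b₁, such that for all b ∈ [b₀, b₁] and all x > 0: (i) if bx ≥ 1 then |R(b,x,w)| ≤ C · min(w,1)/(bx) for all w ≥ 0; and (ii) |R(b,x,w)| ≤ C·w for all w ∈ [0,1]. -/

import Mathlib

open Real Set

/-- The modified Bessel function of the first kind,
`I_α(z) = ∑_{m≥0} (z/2)^{2m+α} / (m! Γ(m+α+1))`. -/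
noncomputable def besselI (α z : ℝ) : ℝ :=
  ∑' m : ℕ, (z / 2) ^ (2 * (m : ℝ) + α) / ((Nat.factorial m : ℝ) * Real.Gamma ((m : ℝ) + α + 1))

/-- The remainder `R(b,x,w) = 1 − √(1+w) e^{−bwx} I_α(bx(1+w))/I_α(bx)`. -/
noncomputable def besselRemainder (α b x w : ℝ) : ℝ :=
  1 - Real.sqrt (1 + w) * Real.exp (-(b * w * x)) * besselI α (b * x * (1 + w)) / besselI α (b * x)

/-!
With `y = bx`, the remainder is `1 - exp E` where `E = ψ(y(1+w)) - ψ(y)` for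
`ψ t = log I_α t - t + (log t)/2`, and `ψ' = r - 1 + (α + 1/2)/t` with `r = I_{α+1}/I_α`.
The ratio solves the Riccati equation `r' = 1 - (2α+1) r/t - r²`, so a fencing argument keeps it
below the positive zero of the right-hand side (Amos' bound), which is `1 - (α + 1/2)/t + O(1/t²)`.
The recurrence `1/r_α = 2(α+1)/t + r_{α+1}` turns this upper bound at `α + 1` into the matching
lower bound at `α`. Hence `ψ' = O(1/t²)` and `|E| = O(min(w,1)/y)`; for `y ≤ 1` the cruder
`0 ≤ r ≤ 1` gives `|E| = O(w)`.
-/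

open Filter

lemma abs_sub_le_sub_of_abs_deriv_le {f f' g g' : ℝ → ℝ} {a b : ℝ} (hab : a ≤ b)
    (hf : ∀ t ∈ Icc a b, HasDerivAt f (f' t) t) (hg : ∀ t ∈ Icc a b, HasDerivAt g (g' t) t)
    (hfg : ∀ t ∈ Icc a b, |f' t| ≤ g' t) : |f b - f a| ≤ g b - g a :=
  image_norm_le_of_norm_deriv_right_le_deriv_boundary' (f := fun t => f t - f a)
    (fun t ht => ((hf t ht).sub_const _).continuousAt.continuousWithinAt)
    (fun t ht => ((hf t (Ico_subset_Icc_self ht)).sub_const _).hasDerivWithinAt)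
    (by simp) (fun t ht => ((hg t ht).sub_const _).continuousAt.continuousWithinAt)
    (fun t ht => ((hg t (Ico_subset_Icc_self ht)).sub_const _).hasDerivWithinAt)
    (fun t ht => hfg t (Ico_subset_Icc_self ht)) ⟨hab, le_rfl⟩

lemma abs_one_sub_exp_le (u : ℝ) : |1 - exp u| ≤ |u| * exp |u| := by
  rcases le_total 0 u with hu | hu
  · have h := mul_le_mul_of_nonneg_right (add_one_le_exp (-u)) (exp_pos u).le
    rw [← exp_add, neg_add_cancel, exp_zero] at h
    rw [abs_of_nonpos (by linarith [one_le_exp hu]), abs_of_nonneg hu]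
    linarith
  · have h := one_le_exp (neg_nonneg.2 hu)
    rw [abs_of_nonneg (by linarith [exp_le_one_iff.2 hu]), abs_of_nonpos hu]
    nlinarith [add_one_le_exp u]

noncomputable def besselTerm (ν : ℝ) (m : ℕ) (z : ℝ) : ℝ :=
  (z / 2) ^ (2 * (m : ℝ) + ν) / ((Nat.factorial m : ℝ) * Real.Gamma ((m : ℝ) + ν + 1))

section Series

variable {ν z : ℝ}

lemma besselI_eq_tsum (ν z : ℝ) : besselI ν z = ∑' m, besselTerm ν m z := rfl

lemma factorial_mul_Gamma_pos (hν : 0 ≤ ν) (m : ℕ) :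
    0 < (Nat.factorial m : ℝ) * Real.Gamma ((m : ℝ) + ν + 1) :=
  mul_pos (mod_cast m.factorial_pos) (Real.Gamma_pos_of_pos (by positivity))

lemma besselTerm_pos (hν : 0 ≤ ν) (m : ℕ) (hz : 0 < z) : 0 < besselTerm ν m z :=
  div_pos (Real.rpow_pos_of_pos (half_pos hz) _) (factorial_mul_Gamma_pos hν m)

lemma besselTerm_add_one (hν : 0 ≤ ν) (m : ℕ) (hz : 0 < z) :
    besselTerm (ν + 1) m z = besselTerm ν m z * (z / 2 / (m + ν + 1)) := by
  have hm : (0 : ℝ) < m + ν + 1 := by positivity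
  have := factorial_mul_Gamma_pos hν m
  unfold besselTerm
  rw [show 2 * (m : ℝ) + (ν + 1) = 2 * m + ν + 1 by ring, Real.rpow_add_one (half_pos hz).ne',
    show (m : ℝ) + (ν + 1) + 1 = (m + ν + 1) + 1 by ring, Real.Gamma_add_one hm.ne']
  field_simp

lemma besselTerm_succ (hν : 0 ≤ ν) (m : ℕ) (hz : 0 < z) :
    besselTerm ν (m + 1) z = besselTerm ν m z * ((z / 2) ^ 2 / ((m + 1) * (m + ν + 1))) := by
  have hm : (0 : ℝ) < m + ν + 1 := by positivity
  have := factorial_mul_Gamma_pos hν m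
  unfold besselTerm
  push_cast
  rw [show 2 * ((m : ℝ) + 1) + ν = 2 * m + ν + 1 + 1 by ring,
    Real.rpow_add_one (half_pos hz).ne', Real.rpow_add_one (half_pos hz).ne', Nat.factorial_succ,
    show (m : ℝ) + 1 + ν + 1 = (m + ν + 1) + 1 by ring, Real.Gamma_add_one hm.ne']
  push_cast
  field_simp

lemma besselTerm_zero_eq_mul (hν : 0 ≤ ν) (hz : 0 < z) :
    besselTerm ν 0 z = 2 * (ν + 1) / z * besselTerm (ν + 1) 0 z := by
  have : (0 : ℝ) < ν + 1 := by linarith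
  rw [besselTerm_add_one hν 0 hz, Nat.cast_zero, zero_add]
  field_simp

lemma summable_besselTerm (hν : 0 ≤ ν) (hz : 0 < z) : Summable (besselTerm ν · z) := by
  refine summable_of_ratio_norm_eventually_le (r := 1 / 2) (by norm_num) ?_
  filter_upwards [eventually_ge_atTop ⌈2 * (z / 2) ^ 2⌉₊] with m hm
  have hm' : 2 * (z / 2) ^ 2 ≤ m := Nat.ceil_le.1 hm
  have hratio : (z / 2) ^ 2 / ((m + 1) * (m + ν + 1)) ≤ 1 / 2 := by
    rw [div_le_iff₀ (by positivity)]
    nlinarith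
  rw [Real.norm_of_nonneg (besselTerm_pos hν _ hz).le,
    Real.norm_of_nonneg (besselTerm_pos hν _ hz).le, besselTerm_succ hν m hz, mul_comm (1 / 2 : ℝ)]
  exact mul_le_mul_of_nonneg_left hratio (besselTerm_pos hν m hz).le

lemma besselI_pos (hν : 0 ≤ ν) (hz : 0 < z) : 0 < besselI ν z :=
  (summable_besselTerm hν hz).tsum_pos (fun m => (besselTerm_pos hν m hz).le) 0
    (besselTerm_pos hν 0 hz)

lemma besselTerm_le_besselTerm (hν : 0 ≤ ν) (m : ℕ) {x : ℝ} (hx : 0 < x) (hxz : x ≤ z) :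
    besselTerm ν m x ≤ besselTerm ν m z := by
  have := factorial_mul_Gamma_pos hν m
  unfold besselTerm
  gcongr

lemma hasDerivAt_besselTerm (hν : 0 ≤ ν) (m : ℕ) (hz : 0 < z) :
    HasDerivAt (besselTerm ν m) ((2 * m + ν) / z * besselTerm ν m z) z := by
  have := factorial_mul_Gamma_pos hν m
  have hpow := ((hasDerivAt_id' z).div_const 2).rpow_const (p := 2 * (m : ℝ) + ν)
    (Or.inl (half_pos hz).ne')
  refine (hpow.div_const _).congr_deriv ?_
  rw [Real.rpow_sub_one (half_pos hz).ne']
  unfold besselTerm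
  field_simp

lemma besselTerm_succ_mul (hν : 0 ≤ ν) (m : ℕ) (hz : 0 < z) :
    2 * (m + 1) / z * besselTerm ν (m + 1) z = besselTerm (ν + 1) m z := by
  have : (0 : ℝ) < m + ν + 1 := by positivity
  rw [besselTerm_succ hν m hz, besselTerm_add_one hν m hz]
  field_simp

lemma summable_deriv_besselTerm (hν : 0 ≤ ν) (hz : 0 < z) :
    Summable fun m : ℕ => (2 * m + ν) / z * besselTerm ν m z := by
  have hshift : Summable fun m : ℕ => 2 * m / z * besselTerm ν m z := by
    refine (summable_nat_add_iff 1).1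
      ((summable_besselTerm (ν := ν + 1) (by linarith) hz).congr fun m => ?_)
    rw [← besselTerm_succ_mul hν m hz]
    push_cast
    ring
  refine (hshift.add ((summable_besselTerm hν hz).mul_left (ν / z))).congr fun m => ?_
  ring

theorem hasDerivAt_besselI (hν : 0 ≤ ν) (hz : 0 < z) :
    HasDerivAt (besselI ν) (ν / z * besselI ν z + besselI (ν + 1) z) z := by
  have hmem : z ∈ Ioo (z / 2) (2 * z) := ⟨by linarith, by linarith⟩
  -- on `(z/2, 2z)` the derivative series is dominated by four times its value at `2z`
  have hbound : ∀ m (x : ℝ), x ∈ Ioo (z / 2) (2 * z) →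
      ‖(2 * m + ν) / x * besselTerm ν m x‖
        ≤ 4 * ((2 * m + ν) / (2 * z) * besselTerm ν m (2 * z)) := by
    intro m x ⟨hx, hx'⟩
    have hx0 : 0 < x := by linarith
    have hp : (0 : ℝ) ≤ 2 * m + ν := by positivity
    rw [Real.norm_of_nonneg (mul_nonneg (div_nonneg hp hx0.le) (besselTerm_pos hν m hx0).le),
      ← mul_assoc, show 4 * ((2 * m + ν) / (2 * z)) = (2 * m + ν) / (z / 2) by ring]
    gcongr
    · exact (besselTerm_pos hν m hx0).le
    · exact besselTerm_le_besselTerm hν m hx0 hx'.le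
  have hderiv : HasDerivAt (besselI ν) (∑' m : ℕ, (2 * m + ν) / z * besselTerm ν m z) z :=
    hasDerivAt_tsum_of_isPreconnected ((summable_deriv_besselTerm hν (by positivity)).mul_left 4)
      isOpen_Ioo isPreconnected_Ioo
      (fun m x hx => hasDerivAt_besselTerm hν m (by linarith [hx.1])) hbound hmem
      (summable_besselTerm hν hz) hmem
  convert hderiv using 1
  have hsplit : Summable fun m : ℕ => 2 * m / z * besselTerm ν m z :=
    ((summable_deriv_besselTerm hν hz).sub ((summable_besselTerm hν hz).mul_left (ν / z))).congr
      fun m => by ring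
  rw [show (fun m : ℕ => (2 * m + ν) / z * besselTerm ν m z)
      = fun m : ℕ => ν / z * besselTerm ν m z + 2 * m / z * besselTerm ν m z from
      funext fun m => by ring, ((summable_besselTerm hν hz).mul_left _).tsum_add hsplit,
    tsum_mul_left, hsplit.tsum_eq_zero_add, besselI_eq_tsum, besselI_eq_tsum]
  simp only [Nat.cast_zero, mul_zero, zero_div, zero_mul, zero_add, Nat.cast_add, Nat.cast_one]
  exact congrArg _ (tsum_congr fun m => (besselTerm_succ_mul hν m hz).symm)

lemma besselTerm_succ_eq_add (hν : 0 ≤ ν) (m : ℕ) (hz : 0 < z) :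
    besselTerm ν (m + 1) z
      = besselTerm (ν + 1 + 1) m z + 2 * (ν + 1) / z * besselTerm (ν + 1) (m + 1) z := by
  have : (0 : ℝ) < m + ν + 1 := by positivity
  rw [besselTerm_add_one (by linarith) m hz, besselTerm_add_one hν m hz,
    besselTerm_add_one hν (m + 1) hz, besselTerm_succ hν m hz]
  push_cast
  field_simp
  ring

theorem besselI_recurrence (hν : 0 ≤ ν) (hz : 0 < z) :
    besselI ν z = besselI (ν + 1 + 1) z + 2 * (ν + 1) / z * besselI (ν + 1) z := by
  have hs : Summable fun m : ℕ => besselTerm (ν + 1) (m + 1) z :=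
    (summable_nat_add_iff 1).2 (summable_besselTerm (by linarith) hz)
  rw [besselI_eq_tsum, (summable_besselTerm hν hz).tsum_eq_zero_add,
    tsum_congr fun m => besselTerm_succ_eq_add hν m hz,
    (summable_besselTerm (by linarith) hz).tsum_add (hs.mul_left _), tsum_mul_left,
    besselTerm_zero_eq_mul hν hz, besselI_eq_tsum (ν + 1),
    (summable_besselTerm (ν := ν + 1) (by linarith) hz).tsum_eq_zero_add, besselI_eq_tsum]
  ring

lemma besselI_add_one_le (hν : 0 ≤ ν) (hz : 0 < z) :
    besselI (ν + 1) z ≤ z / (2 * (ν + 1)) * besselI ν z := by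
  rw [besselI_eq_tsum, besselI_eq_tsum, ← tsum_mul_left]
  refine (summable_besselTerm (by linarith) hz).tsum_le_tsum (fun m => ?_)
    ((summable_besselTerm hν hz).mul_left _)
  rw [besselTerm_add_one hν m hz, mul_comm, div_div]
  gcongr
  · exact (besselTerm_pos hν m hz).le
  · linarith [m.cast_nonneg (α := ℝ)]

end Series

section Ratio

variable {α t : ℝ}

noncomputable def besselRatio (α t : ℝ) : ℝ := besselI (α + 1) t / besselI α t

lemma besselRatio_pos (hα : 0 ≤ α) (ht : 0 < t) : 0 < besselRatio α t :=
  div_pos (besselI_pos (by linarith) ht) (besselI_pos hα ht)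

lemma besselRatio_le_div (hα : 0 ≤ α) (ht : 0 < t) : besselRatio α t ≤ t / (2 * (α + 1)) := by
  rw [besselRatio, div_le_iff₀ (besselI_pos hα ht)]
  exact besselI_add_one_le hα ht

lemma inv_besselRatio (hα : 0 ≤ α) (ht : 0 < t) :
    (besselRatio α t)⁻¹ = 2 * (α + 1) / t + besselRatio (α + 1) t := by
  have := besselI_pos (ν := α + 1) (by linarith) ht
  rw [besselRatio, besselRatio, inv_div, besselI_recurrence hα ht]
  field_simp
  ring

theorem hasDerivAt_besselRatio (hα : 0 ≤ α) (ht : 0 < t) :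
    HasDerivAt (besselRatio α) (1 - (2 * α + 1) / t * besselRatio α t - besselRatio α t ^ 2) t := by
  have hI₀ := besselI_pos hα ht
  have hI₁ := besselI_pos (ν := α + 1) (by linarith) ht
  have hrec : besselI (α + 1 + 1) t = besselI α t - 2 * (α + 1) / t * besselI (α + 1) t := by
    linarith [besselI_recurrence hα ht]
  have hquot := (hasDerivAt_besselI (ν := α + 1) (by linarith) ht).div
    (hasDerivAt_besselI hα ht) hI₀.ne'
  refine hquot.congr_deriv ?_
  rw [besselRatio, hrec]
  field_simp
  ring

lemma hasDerivAt_log_besselI (hα : 0 ≤ α) (ht : 0 < t) :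
    HasDerivAt (fun x => log (besselI α x)) (α / t + besselRatio α t) t := by
  have := besselI_pos hα ht
  refine ((hasDerivAt_besselI hα ht).log this.ne').congr_deriv ?_
  rw [besselRatio]
  field_simp

end Ratio

section Amos

variable {γ t : ℝ}

/-- The positive root `r` of `1 - 2γr/t - r² = 0`: the Riccati equation of `besselRatio α`
is stationary there when `γ = α + 1/2`. -/
noncomputable def amosBound (γ t : ℝ) : ℝ := t / (γ + Real.sqrt (γ ^ 2 + t ^ 2))

lemma hasDerivAt_amosBound (hγ : 0 < γ) (t : ℝ) :
    HasDerivAt (amosBound γ)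
      (γ / (Real.sqrt (γ ^ 2 + t ^ 2) * (γ + Real.sqrt (γ ^ 2 + t ^ 2)))) t := by
  have hpos : 0 < γ ^ 2 + t ^ 2 := by positivity
  have hS := Real.sq_sqrt hpos.le
  have hsqrt := ((hasDerivAt_pow 2 t).const_add (γ ^ 2)).sqrt hpos.ne'
  refine ((hasDerivAt_id' t).div (hsqrt.const_add γ) (by positivity)).congr_deriv ?_
  field_simp
  linear_combination 2 * hS

lemma amosBound_eq_div (hγ : 0 ≤ γ) (ht : 0 < t) :
    amosBound γ t = (Real.sqrt (γ ^ 2 + t ^ 2) - γ) / t := by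
  have hS := Real.sq_sqrt (by positivity : (0 : ℝ) ≤ γ ^ 2 + t ^ 2)
  have : 0 < γ + Real.sqrt (γ ^ 2 + t ^ 2) := by positivity
  rw [amosBound, div_eq_div_iff this.ne' ht.ne']
  linear_combination (-1 : ℝ) * hS

lemma amosBound_riccati (hγ : 0 ≤ γ) (ht : 0 < t) :
    1 - 2 * γ / t * amosBound γ t - amosBound γ t ^ 2 = 0 := by
  have hS := Real.sq_sqrt (by positivity : (0 : ℝ) ≤ γ ^ 2 + t ^ 2)
  rw [amosBound_eq_div hγ ht]
  field_simp
  linear_combination (-1 : ℝ) * hS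

lemma amosBound_le_one (hγ : 0 ≤ γ) : amosBound γ t ≤ 1 := by
  have : |t| ≤ Real.sqrt (γ ^ 2 + t ^ 2) := Real.abs_le_sqrt (by nlinarith)
  exact div_le_one_of_le₀ (by linarith [le_abs_self t]) (by positivity)

lemma amosBound_sub_le (hγ : 0 ≤ γ) (ht : 0 < t) :
    amosBound γ t - 1 + γ / t ≤ γ ^ 2 / (2 * t ^ 2) := by
  rw [amosBound_eq_div hγ ht, div_sub_one ht.ne', ← add_div, div_le_div_iff₀ ht (by positivity)]
  set S := Real.sqrt (γ ^ 2 + t ^ 2)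
  have hS : S ^ 2 = γ ^ 2 + t ^ 2 := Real.sq_sqrt (by positivity)
  have hSt : t ≤ S := Real.le_sqrt_of_sq_le (by nlinarith)
  have key : (S - t) * (2 * t) ≤ γ ^ 2 := by nlinarith
  nlinarith

end Amos

section RatioBounds

variable {α t : ℝ}

theorem besselRatio_le_amosBound (hα : 0 ≤ α) (ht : 0 < t) :
    besselRatio α t ≤ amosBound (α + 1 / 2) t := by
  set a := min t 1
  have ha : 0 < a := lt_min ht one_pos
  -- near the origin the series bound `r ≤ t / (2(α + 1))` already lies below the barrier
  have hinit : besselRatio α a ≤ amosBound (α + 1 / 2) a := by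
    refine (besselRatio_le_div hα ha).trans (div_le_div_of_nonneg_left ha.le (by positivity) ?_)
    have : Real.sqrt ((α + 1 / 2) ^ 2 + a ^ 2) ≤ α + 3 / 2 := by
      rw [Real.sqrt_le_left (by linarith)]
      nlinarith [min_le_right t 1]
    linarith
  have hderiv : ∀ x ∈ Icc a t, HasDerivAt (besselRatio α)
      (1 - (2 * α + 1) / x * besselRatio α x - besselRatio α x ^ 2) x :=
    fun x hx => hasDerivAt_besselRatio hα (ha.trans_le hx.1)
  refine image_le_of_deriv_right_lt_deriv_boundary
    (fun x hx => (hderiv x hx).continuousAt.continuousWithinAt)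
    (fun x hx => (hderiv x (Ico_subset_Icc_self hx)).hasDerivWithinAt) hinit
    (hasDerivAt_amosBound (by linarith)) ?_ ⟨min_le_left t 1, le_rfl⟩
  intro x hx hx_eq
  rw [hx_eq, show 2 * α + 1 = 2 * (α + 1 / 2) by ring,
    amosBound_riccati (by linarith) (ha.trans_le hx.1)]
  have : 0 < α + 1 / 2 := by linarith
  positivity

lemma besselRatio_le_one (hα : 0 ≤ α) (ht : 0 < t) : besselRatio α t ≤ 1 :=
  (besselRatio_le_amosBound hα ht).trans (amosBound_le_one (by linarith))

lemma besselRatio_sub_le (hα : 0 ≤ α) (ht : 0 < t) :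
    besselRatio α t - 1 + (α + 1 / 2) / t ≤ (α + 1 / 2) ^ 2 / (2 * t ^ 2) := by
  linarith [besselRatio_le_amosBound hα ht, amosBound_sub_le (γ := α + 1 / 2) (by linarith) ht]

lemma le_besselRatio_sub (hα : 0 ≤ α) (ht : 0 < t) :
    -((α + 3 / 2) ^ 2 / (2 * t ^ 2)) ≤ besselRatio α t - 1 + (α + 1 / 2) / t := by
  have hr := besselRatio_pos hα ht
  have hup := besselRatio_sub_le (α := α + 1) (by linarith) ht
  rw [show α + 1 + 1 / 2 = α + 3 / 2 by ring] at hup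
  set a := (α + 1 / 2) / t + (α + 3 / 2) ^ 2 / (2 * t ^ 2)
  have ha : 0 ≤ a := by positivity
  -- the recurrence `1 / r_α = 2(α + 1)/t + r_{α+1}` turns the upper bound on `r_{α+1}`
  -- into a lower bound on `r_α`
  have hinv : (besselRatio α t)⁻¹ ≤ 1 + a := by
    rw [inv_besselRatio hα ht, show 2 * (α + 1) / t = (α + 3 / 2) / t + (α + 1 / 2) / t by ring]
    linarith
  have hmul : 1 ≤ besselRatio α t * (1 + a) := by
    simpa [hr.ne'] using mul_le_mul_of_nonneg_left hinv hr.le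
  nlinarith

theorem abs_besselRatio_sub_le (hα : 0 ≤ α) (ht : 0 < t) :
    |besselRatio α t - 1 + (α + 1 / 2) / t| ≤ (α + 3 / 2) ^ 2 / (2 * t ^ 2) := by
  refine abs_le.2 ⟨le_besselRatio_sub hα ht, (besselRatio_sub_le hα ht).trans ?_⟩
  gcongr
  linarith

end RatioBounds

noncomputable def besselExponent (α y w : ℝ) : ℝ :=
  log (1 + w) / 2 - y * w + (log (besselI α (y * (1 + w))) - log (besselI α y))

section Exponent

variable {α y w : ℝ}

lemma besselRemainder_eq (hα : 0 ≤ α) {b x : ℝ} (hy : 0 < b * x) (hw : -1 < w) :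
    besselRemainder α b x w = 1 - exp (besselExponent α (b * x) w) := by
  have h1 : 0 < 1 + w := by linarith
  rw [besselRemainder, besselExponent, exp_add, exp_sub, exp_sub, exp_log (besselI_pos hα hy),
    exp_log (besselI_pos hα (mul_pos hy h1)), div_eq_mul_one_div (log _), ← rpow_def_of_pos h1,
    ← Real.sqrt_eq_rpow, exp_neg]
  ring_nf

lemma abs_besselExponent_le_div (hα : 0 ≤ α) (hy : 0 < y) (hw : 0 ≤ w) :
    |besselExponent α y w| ≤ (α + 3 / 2) ^ 2 / 2 * min w 1 / y := by
  have hyz : y ≤ y * (1 + w) := le_mul_of_one_le_right hy.le (by linarith)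
  set c := (α + 3 / 2) ^ 2 / 2
  have hψ : ∀ t ∈ Icc y (y * (1 + w)), HasDerivAt (fun t => log (besselI α t) - t + log t / 2)
      (besselRatio α t - 1 + (α + 1 / 2) / t) t := by
    intro t ht
    have ht0 : 0 < t := hy.trans_le ht.1
    refine (((hasDerivAt_log_besselI hα ht0).sub (hasDerivAt_id' t)).add
      ((hasDerivAt_log ht0.ne').div_const 2)).congr_deriv ?_
    field_simp
    ring
  have hg : ∀ t ∈ Icc y (y * (1 + w)), HasDerivAt (fun t => -c * t⁻¹) (c / t ^ 2) t :=
    fun t ht => ((hasDerivAt_inv (hy.trans_le ht.1).ne').const_mul (-c)).congr_deriv (by ring)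
  have hbound := abs_sub_le_sub_of_abs_deriv_le hyz hψ hg fun t ht =>
    (abs_besselRatio_sub_le hα (hy.trans_le ht.1)).trans_eq (by ring)
  have hE : besselExponent α y w
      = (log (besselI α (y * (1 + w))) - y * (1 + w) + log (y * (1 + w)) / 2)
        - (log (besselI α y) - y + log y / 2) := by
    rw [besselExponent, log_mul hy.ne' (by linarith)]
    ring
  have hmin : w / (1 + w) ≤ min w 1 := le_min (div_le_self hw (by linarith))
    ((div_le_one (by linarith)).2 (by linarith))
  calc |besselExponent α y w| ≤ -c * (y * (1 + w))⁻¹ - -c * y⁻¹ := hE ▸ hbound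
    _ = c * (w / (1 + w)) / y := by field_simp; ring
    _ ≤ c * min w 1 / y := by gcongr

lemma abs_besselExponent_le_mul (hα : 0 ≤ α) (hy : 0 < y) (hy1 : y ≤ 1) (hw : 0 ≤ w) :
    |besselExponent α y w| ≤ (α + 1) * w := by
  have hyz : y ≤ y * (1 + w) := le_mul_of_one_le_right hy.le (by linarith)
  have hh : ∀ t ∈ Icc y (y * (1 + w)), HasDerivAt (fun t => log (besselI α t) - α * log t - t / 2)
      (besselRatio α t - 1 / 2) t := by
    intro t ht
    have ht0 : 0 < t := hy.trans_le ht.1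
    refine (((hasDerivAt_log_besselI hα ht0).sub ((hasDerivAt_log ht0.ne').const_mul α)).sub
      ((hasDerivAt_id' t).div_const 2)).congr_deriv ?_
    field_simp
    ring
  have hbound := abs_sub_le_sub_of_abs_deriv_le hyz hh (fun t _ => (hasDerivAt_id' t).div_const 2)
    fun t ht => by
      have ht0 : 0 < t := hy.trans_le ht.1
      have := besselRatio_pos hα ht0
      have := besselRatio_le_one hα ht0
      rw [abs_le]
      constructor <;> linarith
  rw [log_mul hy.ne' (by linarith)] at hbound
  have hlog : 0 ≤ log (1 + w) := log_nonneg (by linarith)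
  have hlogw : log (1 + w) ≤ w := by linarith [log_le_sub_one_of_pos (by linarith : 0 < 1 + w)]
  have hyw : y * w ≤ w := mul_le_of_le_one_left hw hy1
  rw [besselExponent, abs_le]
  constructor <;> nlinarith [abs_le.1 hbound, mul_nonneg hy.le hw]

lemma abs_besselRemainder_le (hα : 0 ≤ α) {b x B K : ℝ} (hy : 0 < b * x) (hw : -1 < w)
    (hE : |besselExponent α (b * x) w| ≤ B) (hBK : B ≤ K) :
    |besselRemainder α b x w| ≤ B * exp K := by
  rw [besselRemainder_eq hα hy hw]
  exact (abs_one_sub_exp_le _).trans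
    (mul_le_mul hE (exp_le_exp.2 (hE.trans hBK)) (exp_pos _).le ((abs_nonneg _).trans hE))

end Exponent

theorem besselRemainder_bound_general (α b₀ b₁ : ℝ) (hα : 0 ≤ α) (hb₀ : 0 < b₀) :
    ∃ C : ℝ, 0 ≤ C ∧
      ∀ b ∈ Icc b₀ b₁, ∀ x : ℝ, 0 < x →
        ((1 ≤ b * x → ∀ w : ℝ, 0 ≤ w →
            |besselRemainder α b x w| ≤ C * min w 1 / (b * x)) ∧
         (∀ w ∈ Icc (0 : ℝ) 1, |besselRemainder α b x w| ≤ C * w)) := by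
  obtain ⟨c, hc_def⟩ : ∃ c, (α + 3 / 2) ^ 2 / 2 = c := ⟨_, rfl⟩
  have hc : α + 1 ≤ c := by rw [← hc_def]; nlinarith [sq_nonneg (α + 1 / 2)]
  refine ⟨c * exp c, mul_nonneg (by linarith) (exp_pos c).le, fun b hb x hx => ?_⟩
  have hy : 0 < b * x := mul_pos (hb₀.trans_le hb.1) hx
  have hfar (h1 : 1 ≤ b * x) (w : ℝ) (hw : 0 ≤ w) :
      |besselRemainder α b x w| ≤ c * exp c * min w 1 / (b * x) := by
    have hE := abs_besselExponent_le_div hα hy hw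
    rw [hc_def] at hE
    have hB : c * min w 1 / (b * x) ≤ c := div_le_of_le_mul₀ hy.le (by linarith)
      (by nlinarith [min_le_right w 1, le_min hw zero_le_one])
    exact (abs_besselRemainder_le hα hy (by linarith) hE hB).trans_eq (by ring)
  refine ⟨hfar, fun w ⟨hw, hw1⟩ => ?_⟩
  rcases le_total 1 (b * x) with h1 | h1
  · calc |besselRemainder α b x w| ≤ c * exp c * min w 1 / (b * x) := hfar h1 w hw
      _ ≤ c * exp c * w := by
        rw [min_eq_left hw1]
        exact div_le_self (mul_nonneg (mul_nonneg (by linarith) (exp_pos c).le) hw) h1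
  · calc |besselRemainder α b x w| ≤ (α + 1) * w * exp c :=
          abs_besselRemainder_le hα hy (by linarith) (abs_besselExponent_le_mul hα hy h1 hw)
            (by nlinarith)
      _ ≤ c * exp c * w := by
        nlinarith [mul_le_mul_of_nonneg_right hc (mul_nonneg hw (exp_pos c).le)]

/-- Bounds on the remainder `R(b,x,w)`, uniform over `b` in a compact
subset of `(0,∞)`: if `bx ≥ 1` then `|R(b,x,w)| ≤ C min(w,1)/(bx)` for all `w ≥ 0`,
and in general `|R(b,x,w)| ≤ C w` for `w ∈ [0,1]`. -/
theorem besselRemainder_bound (α b₀ b₁ : ℝ) (hα : 0 ≤ α) (hb₀ : 0 < b₀)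
    (hb : b₀ ≤ b₁) :
    ∃ C : ℝ, 0 ≤ C ∧
      ∀ b ∈ Icc b₀ b₁, ∀ x : ℝ, 0 < x →
        ((1 ≤ b * x → ∀ w : ℝ, 0 ≤ w →
            |besselRemainder α b x w| ≤ C * min w 1 / (b * x)) ∧
         (∀ w ∈ Icc (0 : ℝ) 1, |besselRemainder α b x w| ≤ C * w)) :=
  besselRemainder_bound_general α b₀ b₁ hα hb₀
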